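/- Let G be a 2-node-connected series-parallel graph and let u,v be distinct nodes of G. If G+uv is not series-parallel (i.e., the edge uv is not fully compliant), then there is a 2-cut of G separating u from v, that is, a pair of nodes {l,r} such that u and v lie in different connected components of G−{l,r}. -/

import Mathlib

open scoped Classical

namespace FlowCut

variable {V : Type} [Fintype V] [DecidableEq V]

/-- `G` has a `K₄` minor, witnessed by four disjoint nonempty connected branch sets that are
pairwise joined by an edge of `G`.  A graph is series-parallel iff it has no `K₄` minor. -/
def HasK4Minor (G : SimpleGraph V) : Prop :=
  ∃ B : Fin 4 → Finset V,
    (∀ i, (B i).Nonempty) ∧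
    (∀ i j, i ≠ j → Disjoint (B i) (B j)) ∧
    (∀ i, (G.induce (↑(B i) : Set V)).Connected) ∧
    (∀ i j, i ≠ j → ∃ a ∈ B i, ∃ b ∈ B j, G.Adj a b)

/-- `G` is 2-node-connected: it has at least 3 nodes, is connected, and stays connected
after deleting any single node. -/
def TwoConnected (G : SimpleGraph V) : Prop :=
  3 ≤ Fintype.card V ∧ G.Connected ∧ ∀ v : V, (G.induce {u : V | u ≠ v}).Connected

/-- The pair `{l, r}` separates `u` from `v`: every `u`–`v` walk in `G` meets `l` or `r`,
i.e. `u` and `v` lie in different components of `G − {l, r}`. -/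
def SepPair (G : SimpleGraph V) (l r u v : V) : Prop :=
  ∀ p : G.Walk u v, l ∈ p.support ∨ r ∈ p.support

end FlowCut

/-!
Since `G` has no `K₄` minor, every `K₄` model of `G + uv` uses the edge `uv`: either `u` and `v`
lie in different branch sets, or they lie in one branch set which falls apart in `G` into a part
`U ∋ u` and a part `W ∋ v`; in both cases (after moving one branch set into `U` or `W`) we obtain
branch sets `B₀ ∋ u`, `B₁ ∋ v`, `B₂`, `B₃` of a `K₄` minus the edge `B₀B₁` in `G`. A `u`–`v` path
avoiding `B₂ ∪ B₃` would complete this to a `K₄`, so `B₂ ∪ B₃` is a connected `u`–`v` separator.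

Let `S` be an inclusion-minimal connected `u`–`v` separator avoiding `u` and `v`. If `S` is a
single vertex, any other vertex of `B₂ ∪ B₃` completes it to a pair. Otherwise two leaves `p ≠ q`
of a spanning tree of `S` can be removed from `S` without disconnecting it, so by minimality each
of them has neighbours on the `u`-side and on the `v`-side of `S`. Then `{p, q}` separates `u` from
`v`: a `u`–`v` path avoiding `p` and `q`, together with a `p`–`q` path inside `S`, yields a `K₄`
minor of `G`.
-/

namespace SimpleGraph

variable {V : Type*} {G : SimpleGraph V} {s : Set V} {u v x y : V}

theorem Connected.exists_walk_support_subset (hs : (G.induce s).Connected) (hx : x ∈ s)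
    (hy : y ∈ s) : ∃ w : G.Walk x y, ∀ t ∈ w.support, t ∈ s := by
  obtain ⟨w⟩ := hs.preconnected ⟨x, hx⟩ ⟨y, hy⟩
  refine ⟨w.map (Embedding.induce s).toHom, fun t ht => ?_⟩
  have ht' : t ∈ (w.map (Embedding.induce s).toHom).support := ht
  rw [Walk.support_map, List.mem_map] at ht'
  obtain ⟨t', -, rfl⟩ := ht'
  exact t'.2

theorem Connected.induce_image_val {t : Set s} (h : ((G.induce s).induce t).Connected) :
    (G.induce (Subtype.val '' t)).Connected :=
  (Iso.connected_iff
    { toEquiv := Equiv.Set.image Subtype.val t Subtype.val_injective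
      map_rel_iff' := Iff.rfl }).1 h

theorem connected_induce_insert {T : Set V} (hT : (G.induce T).Connected) (hx : x ∈ T)
    (hux : G.Adj u x) : (G.induce (insert u T)).Connected := by
  rw [Set.insert_eq]
  exact connected_induce_union (by simp) hT.preconnected (Set.mem_singleton u) hx hux

theorem Reachable.reachable_or_reachable_of_sup_edge {a b : V}
    (h : (G ⊔ edge a b).Reachable a x) : G.Reachable a x ∨ G.Reachable b x := by
  suffices ∀ {y : V} (w : (G ⊔ edge a b).Walk y x), G.Reachable a y ∨ G.Reachable b y →
      G.Reachable a x ∨ G.Reachable b x from h.elim fun w => this w (Or.inl .rfl)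
  clear h
  intro y w
  induction w with
  | nil => exact id
  | cons hyz w ih =>
    intro hy
    refine ih ?_
    rcases (sup_adj _ _ _ _).1 hyz with hyz | hyz
    · exact hy.imp (·.trans hyz.reachable) (·.trans hyz.reachable)
    · rcases (edge_adj _ _ _ _).1 hyz with ⟨⟨-, rfl⟩ | ⟨-, rfl⟩, -⟩
      exacts [Or.inr .rfl, Or.inl .rfl]

theorem induce_sup_edge_of_not_and_mem (h : ¬(u ∈ s ∧ v ∈ s)) :
    (G ⊔ edge u v).induce s = G.induce s := by
  ext ⟨a, ha⟩ ⟨b, hb⟩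
  simp only [comap_adj, Function.Embedding.coe_subtype, sup_adj, edge_adj, or_iff_left_iff_imp]
  rintro ⟨⟨rfl, rfl⟩ | ⟨rfl, rfl⟩, -⟩ <;> tauto

theorem induce_sup_edge (hu : u ∈ s) (hv : v ∈ s) :
    (G ⊔ edge u v).induce s = G.induce s ⊔ edge ⟨u, hu⟩ ⟨v, hv⟩ := by
  ext ⟨a, ha⟩ ⟨b, hb⟩
  simp [edge_adj]

theorem Walk.exists_connected_adj_of_exists_mem {S : Set V} :
    ∀ {u v : V} (ω : G.Walk u v), u ∉ S → (∃ t ∈ ω.support, t ∈ S) →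
      ∃ T : Set V, (G.induce T).Connected ∧ u ∈ T ∧ (∀ t ∈ T, t ∈ ω.support) ∧ Disjoint T S ∧
        ∃ z ∈ T, ∃ y ∈ S, y ∈ ω.support ∧ G.Adj z y
  | _, _, .nil, hu, ⟨t, ht, htS⟩ => by simp_all
  | u, _, .cons (v := w) huw ω, hu, hS => by
    by_cases hw : w ∈ S
    · exact ⟨{u}, by simp, rfl, by simp, by simpa using hu, u, rfl, w, hw, by simp, huw⟩
    obtain ⟨T, hT, hwT, hTω, hTS, z, hz, y, hy, hyω, hzy⟩ :=
      ω.exists_connected_adj_of_exists_mem hw (by simpa [hu] using hS)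
    refine ⟨insert u T, connected_induce_insert hT hwT huw, Set.mem_insert u T, ?_,
      Set.disjoint_insert_left.2 ⟨hu, hTS⟩, z, Set.mem_insert_of_mem u hz, y, hy,
      by simp [hyω], hzy⟩
    rintro t (rfl | ht)
    exacts [Walk.start_mem_support _, by simp [hTω t ht]]

theorem Connected.exists_ne_connected_induce_diff [Finite V] (hs : (G.induce s).Connected)
    (hnt : s.Nontrivial) :
    ∃ p ∈ s, ∃ q ∈ s, p ≠ q ∧ (G.induce (s \ {p})).Connected ∧ (G.induce (s \ {q})).Connected := by
  classical
  have : Nontrivial s := hnt.coe_sort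
  have : Fintype s := Fintype.ofFinite s
  obtain ⟨T, hTle, hT⟩ := hs.exists_isTree_le
  obtain ⟨p, q, hpq, hp, hq⟩ := hT.exists_ne_and_degree_eq_one
  have key : ∀ x : s, T.degree x = 1 → (G.induce (s \ {x.1})).Connected := fun x hx => by
    have h := (hT.connected.induce_compl_singleton_of_degree_eq_one hx).mono
      (show T.induce {x}ᶜ ≤ (G.induce s).induce {x}ᶜ from fun _ _ h => hTle h)
    rw [← Set.image_singleton, ← Set.image_val_compl]
    exact h.induce_image_val
  exact ⟨p, p.2, q, q.2, Subtype.val_injective.ne hpq, key p hp, key q hq⟩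

theorem Connected.induce_or_exists_split_of_sup_edge
    (hs : ((G ⊔ edge u v).induce s).Connected) (hu : u ∈ s) (hv : v ∈ s) :
    (G.induce s).Connected ∨ ∃ U W : Set V, U ∪ W = s ∧ Disjoint U W ∧ u ∈ U ∧ v ∈ W ∧
      (G.induce U).Connected ∧ (G.induce W).Connected := by
  set H := G.induce s
  set cu := H.connectedComponentMk ⟨u, hu⟩
  set cv := H.connectedComponentMk ⟨v, hv⟩
  have hcover : ∀ x : s, x ∈ cu.supp ∨ x ∈ cv.supp := fun x => by
    rw [induce_sup_edge hu hv] at hs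
    simpa [ConnectedComponent.mem_supp_iff, ConnectedComponent.eq, cu, cv, reachable_comm]
      using (hs.preconnected ⟨u, hu⟩ x).reachable_or_reachable_of_sup_edge
  by_cases hc : cu = cv
  · refine .inl ((connected_iff_exists_forall_reachable _).2 ⟨⟨u, hu⟩, fun x => ?_⟩)
    rcases hcover x with hx | hx <;> rw [ConnectedComponent.mem_supp_iff] at hx
    exacts [ConnectedComponent.exact hx.symm, ConnectedComponent.exact (hx.trans hc.symm).symm]
  refine .inr ⟨Subtype.val '' cu.supp, Subtype.val '' cv.supp, ?_, ?_, ⟨⟨u, hu⟩, rfl, rfl⟩,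
    ⟨⟨v, hv⟩, rfl, rfl⟩, cu.maximal_connected_induce_supp.prop.induce_image_val,
    cv.maximal_connected_induce_supp.prop.induce_image_val⟩
  · rw [← Set.image_union]
    ext x
    refine ⟨fun ⟨y, _, hy⟩ => hy ▸ y.2, fun hx => ⟨⟨x, hx⟩, hcover _, rfl⟩⟩
  · rw [Set.disjoint_image_iff Subtype.val_injective, Set.disjoint_left]
    intro x hxu hxv
    exact hc (hxu.symm.trans hxv)

end SimpleGraph

namespace FlowCut

open SimpleGraph

section AdjSets

variable {V : Type*} {G : SimpleGraph V} {s s' t t' : Set V} {u v : V}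

def AdjSets (G : SimpleGraph V) (s t : Set V) : Prop :=
  ∃ a ∈ s, ∃ b ∈ t, G.Adj a b

theorem AdjSets.symm (h : AdjSets G s t) : AdjSets G t s :=
  let ⟨a, ha, b, hb, hab⟩ := h
  ⟨b, hb, a, ha, hab.symm⟩

theorem AdjSets.mono (h : AdjSets G s t) (hs : s ⊆ s') (ht : t ⊆ t') : AdjSets G s' t' :=
  let ⟨a, ha, b, hb, hab⟩ := h
  ⟨a, hs ha, b, ht hb, hab⟩

theorem adjSets_union_left : AdjSets G (s ∪ s') t ↔ AdjSets G s t ∨ AdjSets G s' t := by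
  simp only [AdjSets, Set.mem_union, or_and_right, exists_or]

theorem AdjSets.connected_induce_union (h : AdjSets G s t) (hs : (G.induce s).Connected)
    (ht : (G.induce t).Connected) : (G.induce (s ∪ t)).Connected :=
  let ⟨_, ha, _, hb, hab⟩ := h
  SimpleGraph.connected_induce_union hs.preconnected ht.preconnected ha hb hab

theorem AdjSets.of_sup_edge (h : AdjSets (G ⊔ edge u v) s t) (h₁ : ¬(u ∈ s ∧ v ∈ t))
    (h₂ : ¬(v ∈ s ∧ u ∈ t)) : AdjSets G s t := by
  obtain ⟨a, ha, b, hb, hab⟩ := h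
  rcases (sup_adj _ _ _ _).1 hab with hab | hab
  · exact ⟨a, ha, b, hb, hab⟩
  · rcases (edge_adj _ _ _ _).1 hab with ⟨⟨rfl, rfl⟩ | ⟨rfl, rfl⟩, -⟩
    exacts [absurd ⟨ha, hb⟩ h₁, absurd ⟨ha, hb⟩ h₂]

end AdjSets

section Models

variable {V : Type*} {G : SimpleGraph V} {B : Fin 4 → Set V} {u v x : V} {i j : Fin 4}

structure IsK4Model (G : SimpleGraph V) (B : Fin 4 → Set V) : Prop where
  connected : ∀ i, (G.induce (B i)).Connected
  disjoint : Pairwise fun i j => Disjoint (B i) (B j)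
  adj : Pairwise fun i j => AdjSets G (B i) (B j)

theorem IsK4Model.eq_of_mem (h : IsK4Model G B) (hi : x ∈ B i) (hj : x ∈ B j) : i = j :=
  by_contra fun hij => Set.disjoint_left.1 (h.disjoint hij) hi hj

theorem IsK4Model.of_sup_edge (h : IsK4Model (G ⊔ edge u v) B)
    (hconn : ∀ i, (G.induce (B i)).Connected) (huv : ∀ i j, u ∈ B i → v ∈ B j → i = j) :
    IsK4Model G B :=
  ⟨hconn, h.disjoint, fun i j hij => (h.adj hij).of_sup_edge (fun h' => hij (huv i j h'.1 h'.2))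
    fun h' => hij (huv j i h'.2 h'.1).symm⟩

structure IsDiamondModel (G : SimpleGraph V) (u v : V) (B₀ B₁ B₂ B₃ : Set V) : Prop where
  mem₀ : u ∈ B₀
  mem₁ : v ∈ B₁
  connected₀ : (G.induce B₀).Connected
  connected₁ : (G.induce B₁).Connected
  connected₂ : (G.induce B₂).Connected
  connected₃ : (G.induce B₃).Connected
  disjoint₀₁ : Disjoint B₀ B₁
  disjoint₀₂ : Disjoint B₀ B₂
  disjoint₀₃ : Disjoint B₀ B₃
  disjoint₁₂ : Disjoint B₁ B₂
  disjoint₁₃ : Disjoint B₁ B₃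
  disjoint₂₃ : Disjoint B₂ B₃
  adj₀₂ : AdjSets G B₀ B₂
  adj₀₃ : AdjSets G B₀ B₃
  adj₁₂ : AdjSets G B₁ B₂
  adj₁₃ : AdjSets G B₁ B₃
  adj₂₃ : AdjSets G B₂ B₃

theorem IsDiamondModel.symm {B₀ B₁ B₂ B₃ : Set V} (h : IsDiamondModel G u v B₀ B₁ B₂ B₃) :
    IsDiamondModel G v u B₁ B₀ B₂ B₃ :=
  ⟨h.mem₁, h.mem₀, h.connected₁, h.connected₀, h.connected₂, h.connected₃, h.disjoint₀₁.symm,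
    h.disjoint₁₂, h.disjoint₁₃, h.disjoint₀₂, h.disjoint₀₃, h.disjoint₂₃, h.adj₁₂, h.adj₁₃,
    h.adj₀₂, h.adj₀₃, h.adj₂₃⟩

theorem isDiamondModel_union {U W D D₁ D₂ : Set V} (hu : u ∈ U) (hv : v ∈ W)
    (hU : (G.induce U).Connected) (hW : (G.induce W).Connected)
    (hD : (G.induce D).Connected)
    (hD₁ : (G.induce D₁).Connected) (hD₂ : (G.induce D₂).Connected)
    (dUW : Disjoint U W) (dUD : Disjoint U D) (dUD₁ : Disjoint U D₁) (dUD₂ : Disjoint U D₂)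
    (dWD₁ : Disjoint W D₁) (dWD₂ : Disjoint W D₂) (dDD₁ : Disjoint D D₁)
    (dDD₂ : Disjoint D D₂) (dD₁D₂ : Disjoint D₁ D₂)
    (aWD : AdjSets G W D) (aUD₁ : AdjSets G U D₁) (aUD₂ : AdjSets G U D₂)
    (aDD₁ : AdjSets G D D₁) (aDD₂ : AdjSets G D D₂) (aD₁D₂ : AdjSets G D₁ D₂) :
    IsDiamondModel G u v U (W ∪ D) D₁ D₂ :=
  ⟨hu, .inl hv, hU, aWD.connected_induce_union hW hD, hD₁, hD₂,
    Set.disjoint_union_right.2 ⟨dUW, dUD⟩, dUD₁, dUD₂, Set.disjoint_union_left.2 ⟨dWD₁, dDD₁⟩,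
    Set.disjoint_union_left.2 ⟨dWD₂, dDD₂⟩, dD₁D₂, aUD₁, aUD₂,
    aDD₁.mono Set.subset_union_right subset_rfl, aDD₂.mono Set.subset_union_right subset_rfl,
    aD₁D₂⟩

theorem IsK4Model.exists_isDiamondModel_of_mem_of_ne (h : IsK4Model (G ⊔ edge u v) B) {i j : Fin 4}
    (hu : u ∈ B i) (hv : v ∈ B j) (hij : i ≠ j) :
    ∃ B₀ B₁ B₂ B₃, IsDiamondModel G u v B₀ B₁ B₂ B₃ := by
  obtain ⟨m, n, hmn, hmi, hmj, hni, hnj⟩ := (by decide : ∀ i j : Fin 4, i ≠ j →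
    ∃ m n : Fin 4, m ≠ n ∧ m ≠ i ∧ m ≠ j ∧ n ≠ i ∧ n ≠ j) i j hij
  have hu' : ∀ l, u ∈ B l → l = i := fun l hl => h.eq_of_mem hl hu
  have hv' : ∀ l, v ∈ B l → l = j := fun l hl => h.eq_of_mem hl hv
  have hconn : ∀ l, (G.induce (B l)).Connected := fun l => by
    rw [← induce_sup_edge_of_not_and_mem fun h' => hij ((hu' l h'.1).symm.trans (hv' l h'.2))]
    exact h.connected l
  have hadj : ∀ a b, a ≠ b → ¬(a = i ∧ b = j) → ¬(a = j ∧ b = i) → AdjSets G (B a) (B b) :=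
    fun a b hab h₁ h₂ => (h.adj hab).of_sup_edge (fun h' => h₁ ⟨hu' a h'.1, hv' b h'.2⟩)
      fun h' => h₂ ⟨hv' a h'.1, hu' b h'.2⟩
  exact ⟨B i, B j, B m, B n, hu, hv, hconn i, hconn j, hconn m, hconn n, h.disjoint hij,
    h.disjoint hmi.symm, h.disjoint hni.symm, h.disjoint hmj.symm, h.disjoint hnj.symm, h.disjoint hmn,
    hadj _ _ hmi.symm (by tauto) (by tauto), hadj _ _ hni.symm (by tauto) (by tauto),
    hadj _ _ hmj.symm (by tauto) (by tauto), hadj _ _ hnj.symm (by tauto) (by tauto),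
    hadj _ _ hmn (by tauto) (by tauto)⟩

end Models

section Separators

variable {V : Type*} {G : SimpleGraph V} {A B S S' : Set V} {u v p : V}

def Separates (G : SimpleGraph V) (u v : V) (S : Set V) : Prop :=
  ∀ w : G.Walk u v, ∃ t ∈ w.support, t ∈ S

theorem Separates.mono (h : Separates G u v S) (hS : S ⊆ S') : Separates G u v S' := fun w =>
  let ⟨t, ht, htS⟩ := h w
  ⟨t, ht, hS htS⟩

theorem Separates.disjoint (h : Separates G u v S) (hA : (G.induce A).Connected)
    (hB : (G.induce B).Connected) (hu : u ∈ A) (hv : v ∈ B) (hAS : Disjoint A S)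
    (hBS : Disjoint B S) : Disjoint A B := by
  by_contra hAB
  rw [Set.not_disjoint_iff_nonempty_inter] at hAB
  obtain ⟨w, hw⟩ := (induce_union_connected hA.preconnected hB.preconnected hAB
    ).exists_walk_support_subset (Or.inl hu) (Or.inr hv)
  obtain ⟨t, ht, htS⟩ := h w
  rcases hw t ht with htA | htB
  exacts [Set.disjoint_left.1 hAS htA htS, Set.disjoint_left.1 hBS htB htS]

structure IsConnectedSeparator (G : SimpleGraph V) (u v : V) (S : Set V) : Prop where
  connected : (G.induce S).Connected
  left_notMem : u ∉ S
  right_notMem : v ∉ S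
  separates : Separates G u v S

theorem exists_connected_adjSets_of_walk (hAB : Disjoint A B) (hnadj : ¬AdjSets G A B)
    (ω : G.Walk u v) (hu : u ∈ A) (hv : v ∈ B) :
    ∃ T : Set V, (G.induce T).Connected ∧ (∀ t ∈ T, t ∈ ω.support) ∧ Disjoint T A ∧
      Disjoint T B ∧ AdjSets G T A ∧ AdjSets G T B := by
  obtain ⟨T₁, hT₁, huT₁, hT₁ω, hT₁B, z, hz, y, hy, -, hzy⟩ :=
    ω.exists_connected_adj_of_exists_mem (Set.disjoint_left.1 hAB hu)
      ⟨v, ω.end_mem_support, hv⟩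
  have hzA : z ∉ A := fun hzA => hnadj ⟨z, hzA, y, hy, hzy⟩
  obtain ⟨ρ, hρ⟩ := hT₁.exists_walk_support_subset hz huT₁
  obtain ⟨T, hT, hzT, hTρ, hTA, x, hx, a, ha, -, hxa⟩ :=
    ρ.exists_connected_adj_of_exists_mem hzA ⟨u, ρ.end_mem_support, hu⟩
  have hTT₁ : T ⊆ T₁ := fun t ht => hρ t (hTρ t ht)
  exact ⟨T, hT, fun t ht => hT₁ω t (hTT₁ ht), hTA, hT₁B.mono_left hTT₁, ⟨x, hx, a, ha, hxa⟩,
    ⟨z, hzT, y, hy, hzy⟩⟩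

theorem exists_connected_adjSets_of_minimal (hS : Minimal (IsConnectedSeparator G u v) S)
    (hp : p ∈ S) (hSp : (G.induce (S \ {p})).Connected) :
    ∃ A B : Set V, (G.induce A).Connected ∧ (G.induce B).Connected ∧ u ∈ A ∧ v ∈ B ∧
      Disjoint A S ∧ Disjoint B S ∧ AdjSets G {p} A ∧ AdjSets G {p} B := by
  obtain ⟨-, huS, hvS, hsep⟩ := hS.prop
  obtain ⟨ω, hω⟩ : ∃ ω : G.Walk u v, ∀ t ∈ ω.support, t ∈ S → t = p := by
    by_contra! hω
    exact hS.not_prop_of_lt (Set.sdiff_singleton_ssubset.2 hp)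
      ⟨hSp, fun h => huS h.1, fun h => hvS h.1, hω⟩
  have hpω : p ∈ ω.support := by
    obtain ⟨t, ht, htS⟩ := hsep ω
    exact hω t ht htS ▸ ht
  obtain ⟨A, hA, huA, -, hAS, a, ha, y, hyS, hyω, hay⟩ :=
    ω.exists_connected_adj_of_exists_mem huS ⟨p, hpω, hp⟩
  obtain ⟨B, hB, hvB, -, hBS, b, hb, z, hzS, hzω, hbz⟩ :=
    ω.reverse.exists_connected_adj_of_exists_mem hvS ⟨p, by simpa using hpω, hp⟩
  exact ⟨A, B, hA, hB, huA, hvB, hAS, hBS, ⟨p, rfl, a, ha, hω y hyω hyS ▸ hay.symm⟩,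
    ⟨p, rfl, b, hb, hω z (by simpa using hzω) hzS ▸ hbz.symm⟩⟩

end Separators

section K4

variable {V : Type} [Fintype V] {G : SimpleGraph V} {B : Fin 4 → Set V}
  {u v : V}

theorem hasK4Minor_iff : HasK4Minor G ↔ ∃ B, IsK4Model G B := by
  constructor
  · rintro ⟨C, -, hdisj, hconn, hadj⟩
    exact ⟨fun i => C i, hconn, fun i j hij => Finset.disjoint_coe.2 (hdisj i j hij), hadj⟩
  · rintro ⟨B, hconn, hdisj, hadj⟩
    refine ⟨fun i => (B i).toFinset, fun i => ?_, fun i j hij => ?_, fun i => ?_,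
      fun i j hij => ?_⟩
    · exact Set.toFinset_nonempty.2 ((hconn i).nonempty.elim fun x => ⟨x, x.2⟩)
    · exact Set.disjoint_toFinset.2 (hdisj hij)
    · rw [Set.coe_toFinset]
      exact hconn i
    · simpa [AdjSets] using hadj hij

theorem hasK4Minor_of_sets {B₀ B₁ B₂ B₃ : Set V}
    (h₀ : (G.induce B₀).Connected) (h₁ : (G.induce B₁).Connected)
    (h₂ : (G.induce B₂).Connected) (h₃ : (G.induce B₃).Connected)
    (d₀₁ : Disjoint B₀ B₁) (d₀₂ : Disjoint B₀ B₂) (d₀₃ : Disjoint B₀ B₃)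
    (d₁₂ : Disjoint B₁ B₂) (d₁₃ : Disjoint B₁ B₃) (d₂₃ : Disjoint B₂ B₃)
    (a₀₁ : AdjSets G B₀ B₁) (a₀₂ : AdjSets G B₀ B₂) (a₀₃ : AdjSets G B₀ B₃)
    (a₁₂ : AdjSets G B₁ B₂) (a₁₃ : AdjSets G B₁ B₃) (a₂₃ : AdjSets G B₂ B₃) :
    HasK4Minor G := by
  refine hasK4Minor_iff.2 ⟨![B₀, B₁, B₂, B₃], fun i => ?_, fun i j hij => ?_, fun i j hij => ?_⟩
  · fin_cases i <;> assumption
  · fin_cases i <;> fin_cases j <;> first | exact absurd rfl hij | assumption | exact .symm ‹_›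
  · fin_cases i <;> fin_cases j <;> first | exact absurd rfl hij | assumption | exact .symm ‹_›

theorem exists_isDiamondModel_of_split (hsp : ¬HasK4Minor G) {U W D₁ D₂ D₃ : Set V}
    (hu : u ∈ U) (hv : v ∈ W) (hU : (G.induce U).Connected) (hW : (G.induce W).Connected)
    (h₁ : (G.induce D₁).Connected) (h₂ : (G.induce D₂).Connected)
    (h₃ : (G.induce D₃).Connected) (dUW : Disjoint U W) (d₁ : Disjoint (U ∪ W) D₁)
    (d₂ : Disjoint (U ∪ W) D₂) (d₃ : Disjoint (U ∪ W) D₃) (d₁₂ : Disjoint D₁ D₂)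
    (d₁₃ : Disjoint D₁ D₃) (d₂₃ : Disjoint D₂ D₃) (a₁ : AdjSets G (U ∪ W) D₁)
    (a₂ : AdjSets G (U ∪ W) D₂) (a₃ : AdjSets G (U ∪ W) D₃) (a₁₂ : AdjSets G D₁ D₂)
    (a₁₃ : AdjSets G D₁ D₃) (a₂₃ : AdjSets G D₂ D₃) :
    ∃ B₀ B₁ B₂ B₃, IsDiamondModel G u v B₀ B₁ B₂ B₃ := by
  obtain ⟨dU₁, dW₁⟩ := Set.disjoint_union_left.1 d₁
  obtain ⟨dU₂, dW₂⟩ := Set.disjoint_union_left.1 d₂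
  obtain ⟨dU₃, dW₃⟩ := Set.disjoint_union_left.1 d₃
  rcases adjSets_union_left.1 a₁ with u₁ | w₁ <;> rcases adjSets_union_left.1 a₂ with u₂ | w₂ <;>
    rcases adjSets_union_left.1 a₃ with u₃ | w₃
  · exact (hsp (hasK4Minor_of_sets hU h₁ h₂ h₃ dU₁ dU₂ dU₃ d₁₂ d₁₃ d₂₃ u₁ u₂ u₃ a₁₂ a₁₃ a₂₃)).elim
  · exact ⟨_, _, _, _, isDiamondModel_union hu hv hU hW h₃ h₁ h₂ dUW dU₃ dU₁ dU₂ dW₁ dW₂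
      d₁₃.symm d₂₃.symm d₁₂ w₃ u₁ u₂ a₁₃.symm a₂₃.symm a₁₂⟩
  · exact ⟨_, _, _, _, isDiamondModel_union hu hv hU hW h₂ h₁ h₃ dUW dU₂ dU₁ dU₃ dW₁ dW₃
      d₁₂.symm d₂₃ d₁₃ w₂ u₁ u₃ a₁₂.symm a₂₃ a₁₃⟩
  · exact ⟨_, _, _, _, (isDiamondModel_union hv hu hW hU h₁ h₂ h₃ dUW.symm dW₁ dW₂ dW₃ dU₂ dU₃
      d₁₂ d₁₃ d₂₃ u₁ w₂ w₃ a₁₂ a₁₃ a₂₃).symm⟩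
  · exact ⟨_, _, _, _, isDiamondModel_union hu hv hU hW h₁ h₂ h₃ dUW dU₁ dU₂ dU₃ dW₂ dW₃
      d₁₂ d₁₃ d₂₃ w₁ u₂ u₃ a₁₂ a₁₃ a₂₃⟩
  · exact ⟨_, _, _, _, (isDiamondModel_union hv hu hW hU h₂ h₁ h₃ dUW.symm dW₂ dW₁ dW₃ dU₁ dU₃
      d₁₂.symm d₂₃ d₁₃ u₂ w₁ w₃ a₁₂.symm a₂₃ a₁₃).symm⟩
  · exact ⟨_, _, _, _, (isDiamondModel_union hv hu hW hU h₃ h₁ h₂ dUW.symm dW₃ dW₁ dW₂ dU₁ dU₂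
      d₁₃.symm d₂₃.symm d₁₂ u₃ w₁ w₂ a₁₃.symm a₂₃.symm a₁₂).symm⟩
  · exact (hsp (hasK4Minor_of_sets hW h₁ h₂ h₃ dW₁ dW₂ dW₃ d₁₂ d₁₃ d₂₃ w₁ w₂ w₃ a₁₂ a₁₃ a₂₃)).elim

theorem IsK4Model.exists_isDiamondModel_of_mem_of_mem (hsp : ¬HasK4Minor G)
    (h : IsK4Model (G ⊔ edge u v) B) {k : Fin 4} (hu : u ∈ B k) (hv : v ∈ B k) :
    ∃ B₀ B₁ B₂ B₃, IsDiamondModel G u v B₀ B₁ B₂ B₃ := by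
  have hu' : ∀ i, i ≠ k → u ∉ B i := fun i hi hui => hi (h.eq_of_mem hui hu)
  have hv' : ∀ i, i ≠ k → v ∉ B i := fun i hi hvi => hi (h.eq_of_mem hvi hv)
  have hconn : ∀ i, i ≠ k → (G.induce (B i)).Connected := fun i hi => by
    rw [← induce_sup_edge_of_not_and_mem fun h' => hu' i hi h'.1]
    exact h.connected i
  have hadj : ∀ i j, i ≠ j → j ≠ k → AdjSets G (B i) (B j) := fun i j hij hj =>
    (h.adj hij).of_sup_edge (fun h' => hv' j hj h'.2) fun h' => hu' j hj h'.2
  rcases (h.connected k).induce_or_exists_split_of_sup_edge hu hv with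
    hk | ⟨U, W, hUW, dUW, huU, hvW, hU, hW⟩
  · refine (hsp (hasK4Minor_iff.2 ⟨B, h.of_sup_edge (fun i => ?_) fun i j hi hj =>
      (h.eq_of_mem hi hu).trans (h.eq_of_mem hj hv).symm⟩)).elim
    rcases eq_or_ne i k with rfl | hi
    exacts [hk, hconn i hi]
  obtain ⟨a, b, c, hak, hbk, hck, hab, hac, hbc⟩ := (by decide : ∀ k : Fin 4,
    ∃ a b c : Fin 4, a ≠ k ∧ b ≠ k ∧ c ≠ k ∧ a ≠ b ∧ a ≠ c ∧ b ≠ c) k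
  have hUW' : ∀ i, i ≠ k → Disjoint (U ∪ W) (B i) ∧ AdjSets G (U ∪ W) (B i) := fun i hi =>
    hUW ▸ ⟨h.disjoint hi.symm, hadj _ _ hi.symm hi⟩
  exact exists_isDiamondModel_of_split hsp huU hvW hU hW (hconn a hak) (hconn b hbk)
    (hconn c hck) dUW (hUW' a hak).1 (hUW' b hbk).1 (hUW' c hck).1 (h.disjoint hab) (h.disjoint hac)
    (h.disjoint hbc) (hUW' a hak).2 (hUW' b hbk).2 (hUW' c hck).2 (hadj _ _ hab hbk)
    (hadj _ _ hac hck) (hadj _ _ hbc hck)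

theorem exists_isDiamondModel (hsp : ¬HasK4Minor G) (h : HasK4Minor (G ⊔ edge u v)) :
    ∃ B₀ B₁ B₂ B₃, IsDiamondModel G u v B₀ B₁ B₂ B₃ := by
  obtain ⟨B, hB⟩ := hasK4Minor_iff.1 h
  by_cases huv : ∃ i j, u ∈ B i ∧ v ∈ B j
  · obtain ⟨i, j, hi, hj⟩ := huv
    rcases ne_or_eq i j with hij | rfl
    exacts [hB.exists_isDiamondModel_of_mem_of_ne hi hj hij,
      hB.exists_isDiamondModel_of_mem_of_mem hsp hi hj]
  simp only [not_exists, not_and] at huv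
  refine (hsp (hasK4Minor_iff.2 ⟨B, hB.of_sup_edge (fun i => ?_) fun i j hi hj =>
    absurd hj (huv i j hi)⟩)).elim
  rw [← induce_sup_edge_of_not_and_mem fun h' => huv i i h'.1 h'.2]
  exact hB.connected i

theorem IsDiamondModel.separates (hsp : ¬HasK4Minor G) {B₀ B₁ B₂ B₃ : Set V}
    (h : IsDiamondModel G u v B₀ B₁ B₂ B₃) : Separates G u v (B₂ ∪ B₃) := by
  intro ω
  by_contra! hω
  obtain ⟨T, hT, huT, hTω, hTB₁, z, hz, y, hy, -, hzy⟩ := ω.exists_connected_adj_of_exists_mem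
    (Set.disjoint_left.1 h.disjoint₀₁ h.mem₀) ⟨v, ω.end_mem_support, h.mem₁⟩
  have hTB₂ : Disjoint T B₂ := Set.disjoint_left.2 fun t ht => hω t (hTω t ht) ∘ Or.inl
  have hTB₃ : Disjoint T B₃ := Set.disjoint_left.2 fun t ht => hω t (hTω t ht) ∘ Or.inr
  exact hsp (hasK4Minor_of_sets
    (induce_union_connected h.connected₀.preconnected hT.preconnected ⟨u, h.mem₀, huT⟩)
    h.connected₁ h.connected₂ h.connected₃ (Set.disjoint_union_left.2 ⟨h.disjoint₀₁, hTB₁⟩)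
    (Set.disjoint_union_left.2 ⟨h.disjoint₀₂, hTB₂⟩)
    (Set.disjoint_union_left.2 ⟨h.disjoint₀₃, hTB₃⟩) h.disjoint₁₂ h.disjoint₁₃ h.disjoint₂₃
    ⟨z, .inr hz, y, hy, hzy⟩ (h.adj₀₂.mono Set.subset_union_left subset_rfl)
    (h.adj₀₃.mono Set.subset_union_left subset_rfl) h.adj₁₂ h.adj₁₃ h.adj₂₃)

theorem IsDiamondModel.isConnectedSeparator (hsp : ¬HasK4Minor G) {B₀ B₁ B₂ B₃ : Set V}
    (h : IsDiamondModel G u v B₀ B₁ B₂ B₃) : IsConnectedSeparator G u v (B₂ ∪ B₃) :=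
  ⟨h.adj₂₃.connected_induce_union h.connected₂ h.connected₃,
    fun hu => hu.elim (Set.disjoint_left.1 h.disjoint₀₂ h.mem₀)
      (Set.disjoint_left.1 h.disjoint₀₃ h.mem₀),
    fun hv => hv.elim (Set.disjoint_left.1 h.disjoint₁₂ h.mem₁)
      (Set.disjoint_left.1 h.disjoint₁₃ h.mem₁),
    h.separates hsp⟩

theorem hasK4Minor_of_square {A B P : Set V} {p q : V} (hA : (G.induce A).Connected)
    (hB : (G.induce B).Connected) (hP : (G.induce P).Connected) (hpP : p ∈ P)
    (hAB : Disjoint A B) (hPA : Disjoint P A) (hPB : Disjoint P B) (hqA : q ∉ A) (hqB : q ∉ B)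
    (hqP : q ∉ P) (aAB : AdjSets G A B) (apA : AdjSets G {p} A) (apB : AdjSets G {p} B)
    (aqA : AdjSets G {q} A) (aqB : AdjSets G {q} B) (aPq : AdjSets G P {q}) : HasK4Minor G :=
  hasK4Minor_of_sets hA hB hP (by simp) hAB hPA.symm (Set.disjoint_singleton_right.2 hqA)
    hPB.symm (Set.disjoint_singleton_right.2 hqB) (Set.disjoint_singleton_right.2 hqP) aAB
    (apA.symm.mono subset_rfl (Set.singleton_subset_iff.2 hpP)) aqA.symm
    (apB.symm.mono subset_rfl (Set.singleton_subset_iff.2 hpP)) aqB.symm aPq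

theorem hasK4Minor_of_hub {A B P T : Set V} {p q : V} (hA : (G.induce A).Connected)
    (hB : (G.induce B).Connected) (hP : (G.induce P).Connected) (hT : (G.induce T).Connected)
    (hpP : p ∈ P) (hAB : Disjoint A B) (hPA : Disjoint P A) (hPB : Disjoint P B)
    (hTA : Disjoint T A) (hTB : Disjoint T B) (hPT : Disjoint P T) (hqB : q ∉ B) (hqP : q ∉ P)
    (hqT : q ∉ T) (apA : AdjSets G {p} A) (apB : AdjSets G {p} B) (aqA : AdjSets G {q} A)
    (aqB : AdjSets G {q} B) (aTA : AdjSets G T A) (aTB : AdjSets G T B) (aPT : AdjSets G P T) :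
    HasK4Minor G :=
  hasK4Minor_of_sets (aqA.symm.connected_induce_union hA (by simp)) hB hP hT
    (Set.disjoint_union_left.2 ⟨hAB, Set.disjoint_singleton_left.2 hqB⟩)
    (Set.disjoint_union_left.2 ⟨hPA.symm, Set.disjoint_singleton_left.2 hqP⟩)
    (Set.disjoint_union_left.2 ⟨hTA.symm, Set.disjoint_singleton_left.2 hqT⟩) hPB.symm hTB.symm
    hPT (aqB.mono Set.subset_union_right subset_rfl)
    (apA.symm.mono Set.subset_union_left (Set.singleton_subset_iff.2 hpP))
    (aTA.symm.mono Set.subset_union_left subset_rfl)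
    (apB.symm.mono subset_rfl (Set.singleton_subset_iff.2 hpP)) aTB.symm aPT

theorem separates_pair_of_adjSets (hsp : ¬HasK4Minor G) {A B S : Set V} {p q : V}
    (hA : (G.induce A).Connected) (hB : (G.induce B).Connected) (hS : (G.induce S).Connected)
    (hAB : Disjoint A B) (hSA : Disjoint S A) (hSB : Disjoint S B) (hu : u ∈ A) (hv : v ∈ B)
    (hp : p ∈ S) (hq : q ∈ S) (hpq : p ≠ q) (apA : AdjSets G {p} A) (apB : AdjSets G {p} B)
    (aqA : AdjSets G {q} A) (aqB : AdjSets G {q} B) : Separates G u v {p, q} := by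
  intro ω
  by_contra! hω
  obtain ⟨σ, hσ⟩ := hS.exists_walk_support_subset hp hq
  have hqA : q ∉ A := Set.disjoint_left.1 hSA hq
  have hqB : q ∉ B := Set.disjoint_left.1 hSB hq
  by_cases aAB : AdjSets G A B
  · obtain ⟨P, hP, hpP, hPσ, hPq, z, hz, y, rfl, -, hzy⟩ :=
      σ.exists_connected_adj_of_exists_mem (S := {q}) hpq ⟨q, σ.end_mem_support, rfl⟩
    have hPS : P ⊆ S := fun t ht => hσ t (hPσ t ht)
    exact hsp (hasK4Minor_of_square hA hB hP hpP hAB (hSA.mono_left hPS) (hSB.mono_left hPS)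
      hqA hqB (Set.disjoint_singleton_right.1 hPq) aAB apA apB aqA aqB ⟨z, hz, y, rfl, hzy⟩)
  obtain ⟨T, hT, hTω, hTA, hTB, aTA, aTB⟩ := exists_connected_adjSets_of_walk hAB aAB ω hu hv
  have hpT : p ∉ T := fun h => hω p (hTω p h) (.inl rfl)
  have hqT : q ∉ T := fun h => hω q (hTω q h) (.inr rfl)
  -- Follow `σ` from `p` until it first reaches a neighbour of `T ∪ {q}`; meeting `T` gives the
  -- branch sets `A ∪ {q}, B, P, T`, meeting only `q` gives `A ∪ T, B, P, {q}`.
  obtain ⟨P, hP, hpP, hPσ, hPTq, z, hz, y, hy, -, hzy⟩ :=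
    σ.exists_connected_adj_of_exists_mem (S := T ∪ {q}) (by simp [hpT, hpq])
      ⟨q, σ.end_mem_support, .inr rfl⟩
  have hPS : P ⊆ S := fun t ht => hσ t (hPσ t ht)
  obtain ⟨hPT, hPq⟩ := Set.disjoint_union_right.1 hPTq
  rcases hy with hy | rfl
  · exact hsp (hasK4Minor_of_hub hA hB hP hT hpP hAB (hSA.mono_left hPS) (hSB.mono_left hPS)
      hTA hTB hPT hqB (Set.disjoint_singleton_right.1 hPq) hqT apA apB aqA aqB aTA aTB
      ⟨z, hz, y, hy, hzy⟩)
  · exact hsp (hasK4Minor_of_square (aTA.symm.connected_induce_union hA hT) hB hP hpP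
      (Set.disjoint_union_left.2 ⟨hAB, hTB⟩)
      (Set.disjoint_union_right.2 ⟨hSA.mono_left hPS, hPT⟩) (hSB.mono_left hPS)
      (fun h => h.elim hqA hqT) hqB (Set.disjoint_singleton_right.1 hPq)
      (aTB.mono Set.subset_union_right subset_rfl) (apA.mono subset_rfl Set.subset_union_left)
      apB (aqA.mono subset_rfl Set.subset_union_left) aqB ⟨z, hz, y, rfl, hzy⟩)

theorem exists_separates_pair_of_minimal (hsp : ¬HasK4Minor G) {S : Set V}
    (hS : Minimal (IsConnectedSeparator G u v) S) (hnt : S.Nontrivial) :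
    ∃ p ∈ S, ∃ q ∈ S, p ≠ q ∧ Separates G u v {p, q} := by
  obtain ⟨p, hp, q, hq, hpq, hSp, hSq⟩ := hS.prop.connected.exists_ne_connected_induce_diff hnt
  obtain ⟨Ap, Bp, hAp, hBp, huAp, hvBp, hApS, hBpS, apA, apB⟩ :=
    exists_connected_adjSets_of_minimal hS hp hSp
  obtain ⟨Aq, Bq, hAq, hBq, huAq, hvBq, hAqS, hBqS, aqA, aqB⟩ :=
    exists_connected_adjSets_of_minimal hS hq hSq
  have hA := induce_union_connected hAp.preconnected hAq.preconnected ⟨u, huAp, huAq⟩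
  have hB := induce_union_connected hBp.preconnected hBq.preconnected ⟨v, hvBp, hvBq⟩
  have hAS := Set.disjoint_union_left.2 ⟨hApS, hAqS⟩
  have hBS := Set.disjoint_union_left.2 ⟨hBpS, hBqS⟩
  exact ⟨p, hp, q, hq, hpq, separates_pair_of_adjSets hsp hA hB hS.prop.connected
    (hS.prop.separates.disjoint hA hB (.inl huAp) (.inl hvBp) hAS hBS) hAS.symm hBS.symm
    (.inl huAp) (.inl hvBp) hp hq hpq (apA.mono subset_rfl Set.subset_union_left)
    (apB.mono subset_rfl Set.subset_union_left) (aqA.mono subset_rfl Set.subset_union_right)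
    (aqB.mono subset_rfl Set.subset_union_right)⟩

end K4

theorem sepPair_of_separates {V : Type} {G : SimpleGraph V} {l r u v : V}
    (h : Separates G u v {l, r}) : SepPair G l r u v := fun w => by
  obtain ⟨t, ht, rfl | rfl⟩ := h w
  exacts [.inl ht, .inr ht]

variable {V : Type} [Fintype V] [DecidableEq V]

theorem exists_twoCut_of_not_fullyCompliant_general
    (G : SimpleGraph V) (hsp : ¬ HasK4Minor G)
    (u v : V)
    (h : HasK4Minor (G ⊔ SimpleGraph.edge u v)) :
    ∃ l r : V, l ≠ r ∧ u ≠ l ∧ u ≠ r ∧ v ≠ l ∧ v ≠ r ∧ SepPair G l r u v := by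
  obtain ⟨B₀, B₁, B₂, B₃, hB⟩ := exists_isDiamondModel hsp h
  have hS₀ := hB.isConnectedSeparator hsp
  obtain ⟨S, hSS₀, hS⟩ := exists_minimal_le_of_wellFoundedLT _ _ hS₀
  obtain ⟨l, hl, r, hr, hlr, hsep⟩ :
      ∃ l ∈ B₂ ∪ B₃, ∃ r ∈ B₂ ∪ B₃, l ≠ r ∧ Separates G u v {l, r} := by
    rcases S.subsingleton_or_nontrivial with hsub | hnt
    · obtain ⟨⟨l, hl⟩⟩ := hS.prop.connected.nonempty
      obtain ⟨⟨b₂, hb₂⟩⟩ := hB.connected₂.nonempty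
      obtain ⟨⟨b₃, hb₃⟩⟩ := hB.connected₃.nonempty
      have hnt : (B₂ ∪ B₃).Nontrivial :=
        ⟨b₂, .inl hb₂, b₃, .inr hb₃, fun h => Set.disjoint_left.1 hB.disjoint₂₃ hb₂ (h ▸ hb₃)⟩
      obtain ⟨r, hr, hrl⟩ := hnt.exists_ne l
      exact ⟨l, hSS₀ hl, r, hr, hrl.symm,
        hS.prop.separates.mono fun t ht => .inl (hsub ht hl)⟩
    · obtain ⟨p, hp, q, hq, hpq, hsep⟩ := exists_separates_pair_of_minimal hsp hS hnt
      exact ⟨p, hSS₀ hp, q, hSS₀ hq, hpq, hsep⟩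
  refine ⟨l, r, hlr, ?_, ?_, ?_, ?_, sepPair_of_separates hsep⟩ <;> rintro rfl
  exacts [hS₀.left_notMem hl, hS₀.left_notMem hr, hS₀.right_notMem hl, hS₀.right_notMem hr]

/-- In a 2-node-connected series-parallel graph, if `G + uv` is not
series-parallel then some 2-cut `{l, r}` separates `u` from `v`. -/
theorem exists_twoCut_of_not_fullyCompliant
    (G : SimpleGraph V) (hsp : ¬ HasK4Minor G) (h2 : TwoConnected G)
    (u v : V) (huv : u ≠ v)
    (h : HasK4Minor (G ⊔ SimpleGraph.edge u v)) :
    ∃ l r : V, l ≠ r ∧ u ≠ l ∧ u ≠ r ∧ v ≠ l ∧ v ≠ r ∧ SepPair G l r u v :=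
  exists_twoCut_of_not_fullyCompliant_general G hsp u v h

end FlowCut
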